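/- arXiv:2209.11947 — 3 statements merged into one kernel-verified Lean document; each statement's English description precedes it below -/
import Mathlib

section
/- If a simple graph G contains no subgraph isomorphic to C_6^△, then for every vertex v of G, the subgraph of G induced on the neighborhood N(v) contains no path P_6 on 6 vertices as a subgraph. -/
open SimpleGraph

open scoped Classical in
/-- Real adjacency matrix of a simple graph. -/
noncomputable def adjMat {V : Type*} [Fintype V] (G : SimpleGraph V) : Matrix V V ℝ :=
  Matrix.of fun u v => if G.Adj u v then (1 : ℝ) else 0

/-- `G` contains a subgraph isomorphic to `F`. -/
def Copies {α β : Type*} (F : SimpleGraph α) (G : SimpleGraph β) : Prop :=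
  ∃ f : F →g G, Function.Injective f

/-- The join `K_k ∇ t·K_1`. -/
def cliqueJoinIndep (k t : ℕ) : SimpleGraph (Fin k ⊕ Fin t) where
  Adj u v := u ≠ v ∧ (u.isLeft = true ∨ v.isLeft = true)
  symm := ⟨fun u v ⟨h1, h2⟩ => ⟨h1.symm, h2.symm⟩⟩
  loopless := ⟨fun u ⟨h, _⟩ => h rfl⟩

instance (k t : ℕ) : DecidableRel (cliqueJoinIndep k t).Adj := fun u v =>
  inferInstanceAs (Decidable (u ≠ v ∧ (u.isLeft = true ∨ v.isLeft = true)))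

/-- `C_t^△`: the cycle `C_t` plus one extra vertex joined to the adjacent
vertices `0` and `1` of the cycle. -/
def cycTri (t : ℕ) : SimpleGraph (Fin t ⊕ Unit) :=
  SimpleGraph.fromRel (fun u v =>
    match u, v with
    | .inl i, .inl j => (cycleGraph t).Adj i j
    | .inl i, .inr _ => i.val = 0 ∨ i.val = 1
    | .inr _, _ => False)

/-!
If `p₀ p₁ … p₅` is a path in the neighbourhood of `v`, then `v p₁ p₂ … p₅` is a 6-cycle (`v` is
adjacent to every `pᵢ`) and `p₀` is adjacent to the consecutive cycle vertices `v` and `p₁`.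
More generally, `C_n^△` is a subgraph of the cone over `P_n`.
-/

theorem copies_iff_isContained {α β : Type*} {F : SimpleGraph α} {G : SimpleGraph β} :
    Copies F G ↔ F ⊑ G :=
  ⟨fun ⟨f, hf⟩ => ⟨f.toCopy hf⟩, fun ⟨f⟩ => ⟨f.toHom, f.injective⟩⟩

@[simp] theorem cycTri_adj_inl_inl {n : ℕ} {i j : Fin n} :
    (cycTri n).Adj (.inl i) (.inl j) ↔ (cycleGraph n).Adj i j := by
  simp only [cycTri, fromRel_adj, ne_eq, Sum.inl.injEq]
  exact ⟨fun h => h.2.elim id (·.symm), fun h => ⟨h.ne, .inl h⟩⟩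

@[simp] theorem cycTri_adj_inl_inr {n : ℕ} {i : Fin n} {u : Unit} :
    (cycTri n).Adj (.inl i) (.inr u) ↔ i.val = 0 ∨ i.val = 1 := by
  simp [cycTri]

namespace SimpleGraph

variable {α V : Type*}

def cone (H : SimpleGraph α) : SimpleGraph (Option α) where
  Adj
    | some a, some b => H.Adj a b
    | none, some _ | some _, none => True
    | none, none => False
  symm := ⟨by
    rintro (_ | a) (_ | b) h
    exacts [h, trivial, trivial, h.symm]⟩
  loopless := ⟨by rintro (_ | a) h; exacts [h, H.loopless.irrefl a h]⟩

theorem cone_isContained_of_isContained_induce_neighborSet {H : SimpleGraph α}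
    {G : SimpleGraph V} {v : V} (h : H ⊑ G.induce (G.neighborSet v)) : cone H ⊑ G := by
  obtain ⟨f⟩ := h
  let g : Option α → V := fun x => x.elim v fun a => (f a).1
  have hg_adj : ∀ ⦃x y⦄, (cone H).Adj x y → G.Adj (g x) (g y) := by
    rintro (_ | a) (_ | b) h
    exacts [h.elim, (f b).2, (f a).2.symm, f.toHom.map_adj h]
  refine ⟨⟨⟨g, @hg_adj⟩, ?_⟩⟩
  rintro (_ | a) (_ | b) h
  · rfl
  · exact absurd h (f b).2.ne
  · exact absurd h (f a).2.ne'
  · exact congrArg some (f.injective (Subtype.ext h))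

theorem pathGraph_adj_of_cycleGraph_adj {n : ℕ} [NeZero n] {i j : Fin n} (hi : i ≠ 0)
    (hj : j ≠ 0) (h : (cycleGraph n).Adj i j) : (pathGraph n).Adj i j := by
  have succ_of_sub_eq_one : ∀ {a b : Fin n}, a ≠ 0 → (a - b).val = 1 → a.val = b.val + 1 := by
    intro a b ha hab
    have ha' : a.val ≠ 0 := fun h => ha (Fin.ext (by simpa using h))
    rcases le_or_gt b a with hba | hab'
    · rw [Fin.coe_sub_iff_le.mpr hba] at hab; omega
    · rw [Fin.coe_sub_iff_lt.mpr hab'] at hab; omega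
  rw [pathGraph_adj]
  rcases cycleGraph_adj'.mp h with h | h
  · exact .inr (succ_of_sub_eq_one hi h).symm
  · exact .inl (succ_of_sub_eq_one hj h).symm

end SimpleGraph

theorem cycTri_isContained_cone_pathGraph (n : ℕ) [NeZero n] :
    cycTri n ⊑ cone (pathGraph n) := by
  let φ : Fin n ⊕ Unit → Option (Fin n)
    | .inl i => if i = 0 then none else some i
    | .inr _ => some 0
  have adj_inl_inr : ∀ (i : Fin n) (u : Unit), (cycTri n).Adj (.inl i) (.inr u) →
      (cone (pathGraph n)).Adj (φ (.inl i)) (φ (.inr u)) := by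
    intro i u h
    simp only [φ, cycTri_adj_inl_inr] at h ⊢
    split_ifs with hi
    · trivial
    · have hi1 : i.val = 1 := h.resolve_left fun h0 => hi (Fin.ext h0)
      exact pathGraph_adj.mpr (.inr (by simp [hi1]))
  have hφ_adj : ∀ ⦃x y⦄, (cycTri n).Adj x y → (cone (pathGraph n)).Adj (φ x) (φ y) := by
    rintro (i | u) (j | w) h
    · simp only [φ, cycTri_adj_inl_inl] at h ⊢
      split_ifs with hi hj hj
      · exact absurd (hi.trans hj.symm) h.ne
      all_goals first | trivial | exact pathGraph_adj_of_cycleGraph_adj hi hj h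
    · exact adj_inl_inr i w h
    · exact (adj_inl_inr j u h.symm).symm
    · exact absurd h (by simp [cycTri])
  have hφ_inj : Function.Injective φ := by
    rintro (i | _) (j | _) h <;> simp only [φ] at h <;> (try split_ifs at h) <;> simp_all
  exact ⟨Hom.toCopy ⟨φ, @hφ_adj⟩ hφ_inj⟩

theorem neighborhood_P6_free_of_C6tri_free {V : Type*} (G : SimpleGraph V)
    (hfree : ¬ Copies (cycTri 6) G) (v : V) :
    ¬ Copies (pathGraph 6) (G.induce (G.neighborSet v)) := by
  rw [copies_iff_isContained] at hfree ⊢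
  exact fun hpath => hfree <| (cycTri_isContained_cone_pathGraph 6).trans
    (cone_isContained_of_isContained_induce_neighborSet hpath)
end

section
/- For n ≥ 6, the graph K_2 ∇ ((n-2)·K_1) (two adjacent vertices joined to n-2 independent vertices) is connected, has exactly 2n - 3 edges, and contains no path on 6 vertices as a subgraph. -/
open SimpleGraph

/-!
Every edge of `K_k ∇ t·K_1` meets the clique `K_k`, and each clique vertex is adjacent to all
other vertices. The latter gives connectivity and the degrees (`k + t - 1` on the clique, `k` off
it), hence the edge count by the handshake lemma. The former bounds paths: the disjoint edges
`{2i, 2i+1}` of an embedded path on `m` vertices need distinct clique vertices, so `m / 2 ≤ k`;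
for `k = 2` this excludes `P_6`.
-/

namespace cliqueJoinIndep

variable {k t : ℕ}

theorem adj_iff {u v : Fin k ⊕ Fin t} :
    (cliqueJoinIndep k t).Adj u v ↔ u ≠ v ∧ (u.isLeft = true ∨ v.isLeft = true) :=
  Iff.rfl

theorem exists_inl_of_adj {u v : Fin k ⊕ Fin t} (h : (cliqueJoinIndep k t).Adj u v) :
    ∃ a : Fin k, u = .inl a ∨ v = .inl a := by
  obtain ⟨-, hu | hv⟩ := h
  · obtain ⟨a, rfl⟩ := Sum.isLeft_iff.mp hu
    exact ⟨a, .inl rfl⟩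
  · obtain ⟨a, rfl⟩ := Sum.isLeft_iff.mp hv
    exact ⟨a, .inr rfl⟩

theorem connected [NeZero k] : (cliqueJoinIndep k t).Connected := by
  have toCentre (w : Fin k ⊕ Fin t) : (cliqueJoinIndep k t).Reachable w (.inl 0) := by
    by_cases hw : w = .inl 0
    · exact hw ▸ .rfl
    · exact Adj.reachable ⟨hw, .inr rfl⟩
  exact Connected.mk fun u v => (toCentre u).trans (toCentre v).symm

theorem neighborFinset_inl (i : Fin k) :
    (cliqueJoinIndep k t).neighborFinset (.inl i) = Finset.univ.erase (.inl i) := by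
  ext v
  simp [adj_iff, ne_comm]

theorem neighborFinset_inr (j : Fin t) :
    (cliqueJoinIndep k t).neighborFinset (.inr j) = Finset.univ.map .inl := by
  ext v
  cases v <;> simp [adj_iff]

theorem degree_inl (i : Fin k) : (cliqueJoinIndep k t).degree (.inl i) = k + t - 1 := by
  simp [← card_neighborFinset_eq_degree, neighborFinset_inl]

theorem degree_inr (j : Fin t) : (cliqueJoinIndep k t).degree (.inr j) = k := by
  simp [← card_neighborFinset_eq_degree, neighborFinset_inr]

theorem two_mul_card_edgeFinset :
    2 * (cliqueJoinIndep k t).edgeFinset.card = k * (k + t - 1) + t * k := by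
  rw [← sum_degrees_eq_twice_card_edges, Fintype.sum_sum_type]
  simp [degree_inl, degree_inr]

theorem le_of_copies_pathGraph {m : ℕ} (h : Copies (pathGraph m) (cliqueJoinIndep k t)) :
    m ≤ 2 * k + 1 := by
  obtain ⟨f, hf⟩ := h
  have hlt (i : Fin (m / 2)) : 2 * i + 1 < m := by omega
  have hadj (i : Fin (m / 2)) :
      (cliqueJoinIndep k t).Adj (f ⟨2 * i, Nat.lt_of_succ_lt (hlt i)⟩) (f ⟨2 * i + 1, hlt i⟩) :=
    f.map_adj (pathGraph_adj.mpr (.inl rfl))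
  choose g hg using fun i => exists_inl_of_adj (hadj i)
  have hg_inj : Function.Injective g := by
    intro i j hij
    rcases hg i with hi | hi <;> rcases hg j with hj | hj <;>
      · have := Fin.mk.inj_iff.mp (hf (hi.trans (hij ▸ hj.symm)))
        omega
  have hcard := Fintype.card_le_of_injective g hg_inj
  rw [Fintype.card_fin, Fintype.card_fin] at hcard
  omega

end cliqueJoinIndep

theorem K2_join_indep_properties (n : ℕ) (hn : 6 ≤ n) :
    (cliqueJoinIndep 2 (n - 2)).Connected ∧
      (cliqueJoinIndep 2 (n - 2)).edgeFinset.card = 2 * n - 3 ∧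
      ¬ Copies (pathGraph 6) (cliqueJoinIndep 2 (n - 2)) := by
  refine ⟨cliqueJoinIndep.connected, ?_, fun h => ?_⟩
  · have := cliqueJoinIndep.two_mul_card_edgeFinset (k := 2) (t := n - 2)
    omega
  · have := cliqueJoinIndep.le_of_copies_pathGraph h
    omega
end

section
/- Let G be a C_6^△-free graph and let v be a vertex of G. If the induced subgraph G[N(v)] contains a copy of K_5 as a component, then any vertex w at distance 2 from v has at most one neighbor inside that K_5. -/
open SimpleGraph

/-! Together with `v`, the `K_5` is a 6-clique `K` of `G` avoiding `w`. If `w` had two neighbours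
`a ≠ b` in `K`, then with the other four vertices `c, d, e, f` of `K`, the closed walk
`a c d e b w` is a 6-cycle, and `f`, adjacent to both `a` and `c`, completes it to a `C_6^△`. -/

def cycleGraphHomOfAdj {V : Type*} {G : SimpleGraph V} {n : ℕ} (f : Fin (n + 2) → V)
    (hf : ∀ i, G.Adj (f i) (f (i + 1))) : cycleGraph (n + 2) →g G where
  toFun := f
  map_rel' {i j} hij := by
    rcases cycleGraph_adj.mp hij with h | h
    · rw [← sub_add_cancel i j, h, add_comm]
      exact (hf j).symm
    · rw [← sub_add_cancel j i, h, add_comm]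
      exact hf i

theorem copies_cycTri_of_cycle {V : Type*} {G : SimpleGraph V} {n : ℕ}
    (c : cycleGraph (n + 2) →g G) (hc : Function.Injective c) {y : V}
    (hy : y ∉ Set.range c) (hy₀ : G.Adj (c 0) y) (hy₁ : G.Adj (c 1) y) :
    Copies (cycTri (n + 2)) G := by
  refine ⟨⟨Sum.elim c fun _ => y, ?_⟩, ?_⟩
  · have hapex : ∀ i : Fin (n + 2), i.val = 0 ∨ i.val = 1 → G.Adj (c i) y := by
      rintro i (h | h)
      · rwa [show i = 0 from Fin.ext h]
      · rwa [show i = 1 from Fin.ext h]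
    rintro (i | _) (j | _) ⟨-, h | h⟩
    exacts [c.map_adj h, (c.map_adj h).symm, hapex i h, h.elim, h.elim, (hapex j h).symm,
      h.elim, h.elim]
  · exact hc.sumElim (Function.injective_of_subsingleton _) fun i _ h => hy ⟨i, h⟩

theorem copies_cycTri_six_of_isNClique {V : Type*} [DecidableEq V] {G : SimpleGraph V}
    {K : Finset V} (hK : G.IsNClique 6 K) {w a b : V} (hw : w ∉ K) (ha : a ∈ K) (hb : b ∈ K)
    (hab : a ≠ b) (hwa : G.Adj w a) (hwb : G.Adj w b) : Copies (cycTri 6) G := by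
  have hrest : (K \ {a, b}).card = 4 := by
    rw [Finset.card_sdiff_of_subset (Finset.insert_subset ha (Finset.singleton_subset_iff.mpr hb)),
      hK.card_eq, Finset.card_pair hab]
  obtain ⟨c, d, e, f, hcd, hce, hcf, hde, hdf, hef, hcdef⟩ := Finset.card_eq_four.mp hrest
  have hsub : {c, d, e, f} ⊆ K \ {a, b} := hcdef.ge
  simp only [Finset.insert_subset_iff, Finset.singleton_subset_iff, Finset.mem_sdiff,
    Finset.mem_insert, Finset.mem_singleton, not_or, ← ne_eq] at hsub
  obtain ⟨⟨hc, hca, hcb⟩, ⟨hd, hda, hdb⟩, ⟨he, hea, heb⟩, ⟨hf, hfa, hfb⟩⟩ := hsub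
  have hadj : ∀ {x y}, x ∈ K → y ∈ K → x ≠ y → G.Adj x y := fun hx hy hxy => hK.1 hx hy hxy
  have hKw : ∀ {x}, x ∈ K → x ≠ w := fun hx h => hw (h ▸ hx)
  let cycle := cycleGraphHomOfAdj (G := G) ![a, c, d, e, b, w] <| by
    intro i
    fin_cases i
    · exact hadj ha hc hca.symm
    · exact hadj hc hd hcd
    · exact hadj hd he hde
    · exact hadj he hb heb
    · exact hwb.symm
    · exact hwa
  have hcycle : ⇑cycle = ![a, c, d, e, b, w] := rfl
  refine copies_cycTri_of_cycle cycle ?_ (y := f) ?_ (hadj ha hf hfa.symm) (hadj hc hf hcf)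
  · simp only [hcycle, Matrix.vecCons, Fin.cons_injective_iff]
    simp [Function.injective_of_subsingleton, hab, hca.symm, hda.symm, hea.symm, hcb, hdb, heb,
      hcd, hce, hde, hKw ha, hKw hb, hKw hc, hKw hd, hKw he]
  · simp [hcycle, hfa, hfb, hcf.symm, hdf.symm, hef.symm, hKw hf]

theorem at_most_one_neighbor_in_K5_component_general {V : Type*} [Fintype V] [DecidableEq V]
    (G : SimpleGraph V) [DecidableRel G.Adj]
    (hfree : ¬ Copies (cycTri 6) G) (v : V)
    (S : Finset V) (hS5 : S.card = 5)
    (hSnbr : ∀ a ∈ S, G.Adj v a)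
    (hclique : ∀ a ∈ S, ∀ b ∈ S, a ≠ b → G.Adj a b)
    (w : V) (hw : G.dist v w = 2) :
    (G.neighborFinset w ∩ S).card ≤ 1 := by
  have hvw : ¬ G.Adj v w := by
    rw [← dist_eq_one_iff_adj]
    omega
  have hwv : w ≠ v := by
    rintro rfl
    simp at hw
  have hK : G.IsNClique 6 (insert v S) :=
    IsNClique.insert ⟨fun a ha b hb => hclique a ha b hb, hS5⟩ hSnbr
  have hwK : w ∉ insert v S := by
    simpa [hwv] using fun hwS => hvw (hSnbr w hwS)
  by_contra! hcard
  obtain ⟨a, ha, b, hb, hab⟩ := Finset.one_lt_card.mp hcard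
  rw [Finset.mem_inter, mem_neighborFinset] at ha hb
  exact hfree <| copies_cycTri_six_of_isNClique hK hwK (Finset.mem_insert_of_mem ha.2)
    (Finset.mem_insert_of_mem hb.2) hab ha.1 hb.1

theorem at_most_one_neighbor_in_K5_component {V : Type*} [Fintype V] [DecidableEq V]
    (G : SimpleGraph V) [DecidableRel G.Adj]
    (hfree : ¬ Copies (cycTri 6) G) (v : V)
    (S : Finset V) (hS5 : S.card = 5)
    (hSnbr : ∀ a ∈ S, G.Adj v a)
    (hclique : ∀ a ∈ S, ∀ b ∈ S, a ≠ b → G.Adj a b)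
    (hcomp : ∀ a ∈ S, ∀ b : V, G.Adj v b → G.Adj a b → b ∈ S)
    (w : V) (hw : G.dist v w = 2) :
    (G.neighborFinset w ∩ S).card ≤ 1 :=
  at_most_one_neighbor_in_K5_component_general G hfree v S hS5 hSnbr hclique w hw
end
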